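/- Let μ*_{DJR}(η) and μ*_{E'}(θ) be the two Lie brackets on the 8-dimensional dual of sl(3) given in the paper's tables (5.3) and (4.13) respectively. If the linear combination μ*(s,t) = s·μ*_{DJR}(η) + t·μ*_{E'}(θ) satisfies the Jacobi identity for all real s, t, then η = θ. -/

import Mathlib

noncomputable section

def dd (x y : Fin 8 → ℝ) (i j : Fin 8) : ℝ := x i * y j - y i * x j

/-- The bracket μ*_{DJR}(η) of table (5.3), coordinates X₁₁,X₂₂,X₁₂,X₂₁,X₁₃,X₃₁,X₂₃,X₃₂. -/
def brDJR (η : ℝ) (x y : Fin 8 → ℝ) : Fin 8 → ℝ :=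
  ![0, 0,
    (1 - η) * dd x y 0 2 - (1 + η) * dd x y 1 2,
    (1 + η) * dd x y 0 3 - (1 - η) * dd x y 1 3,
    (1 + η) * dd x y 0 4 - 2 * η * dd x y 1 4 + 2 * dd x y 2 6,
    (1 - η) * dd x y 0 5 + 2 * η * dd x y 1 5 + 2 * dd x y 3 7,
    2 * η * dd x y 0 6 + (1 - η) * dd x y 1 6,
    -2 * η * dd x y 0 7 + (1 + η) * dd x y 1 7]

/-- The bracket μ*_{E'}(θ) of table (4.13), same coordinates (X₃₃ = −X₁₁ − X₂₂). -/
def brE' (θ : ℝ) (x y : Fin 8 → ℝ) : Fin 8 → ℝ :=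
  ![-(θ + 1) * dd x y 0 4 - 2 * θ * dd x y 4 1 - 2 * dd x y 2 6,
    -(1/2) * (θ + 1) * dd x y 0 4 - θ * dd x y 4 1 - dd x y 2 6,
    (1/2) * (3 * θ - 1) * dd x y 2 4,
    (1/2) * (1 - θ) * dd x y 0 6 + (1/2) * (3 * θ + 1) * dd x y 4 3 + (θ - 1) * dd x y 1 6,
    0,
    θ * dd x y 0 1 + dd x y 2 3 + dd x y 4 5 + dd x y 6 7,
    (1/2) * (3 * θ + 1) * dd x y 4 6,
    (1/2) * (1 + θ) * dd x y 0 2 + (θ + 1) * dd x y 2 1 + (1/2) * (1 - 3 * θ) * dd x y 4 7]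

/-- The mixed composition μ*(s,t) = s·μ*_{DJR}(η) + t·μ*_{E'}(θ). -/
def brMix (η θ s t : ℝ) (x y : Fin 8 → ℝ) : Fin 8 → ℝ :=
  s • brDJR η x y + t • brE' θ x y

/-- if μ*(s,t) satisfies the Jacobi identity for all real s, t,
then η = θ. -/
theorem stmt10 (η θ : ℝ)
    (h : ∀ s t : ℝ, ∀ x y z : Fin 8 → ℝ,
      brMix η θ s t (brMix η θ s t x y) z + brMix η θ s t (brMix η θ s t y z) x
        + brMix η θ s t (brMix η θ s t z x) y = 0) :
    η = θ := by
  have H := congrFun (h 1 1 ![1,0,0,0,0,0,0,0] ![0,1,0,0,0,0,0,0] ![0,0,0,0,1,0,0,0]) 0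
  simp only [brMix, brDJR, brE', dd, Pi.add_apply, Pi.smul_apply, smul_eq_mul,
    Matrix.cons_val_zero, Matrix.cons_val_one, Matrix.head_cons, Matrix.cons_val_fin_one,
    Matrix.cons_val', Matrix.empty_val', Pi.zero_apply] at H
  simp only [Matrix.cons_val] at H
  norm_num [Fin.isValue, Matrix.cons_val_zero, Matrix.cons_val_one, Matrix.head_cons] at H
  linarith
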